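/- Let T be a bounded linear operator on H admitting an A-adjoint T♯. Then w_A(T) = ‖T‖_A/2 if and only if for every θ ∈ ℝ one has ‖(e^{iθ}T + e^{−iθ}T♯)/2‖_A = ‖(e^{iθ}T − e^{−iθ}T♯)/(2i)‖_A = ‖T‖_A/2 (note that e^{−iθ}T♯ is an A-adjoint of e^{iθ}T, so these are ‖Re_A(e^{iθ}T)‖_A and ‖Im_A(e^{iθ}T)‖_A). -/

import Mathlib

noncomputable section

open Complex ContinuousLinearMap

variable {H : Type*} [NormedAddCommGroup H] [InnerProductSpace ℂ H] [CompleteSpace H]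

/-- The `A`-inner product `⟨x, y⟩_A = ⟨A x, y⟩`. -/
def innA (A : H →L[ℂ] H) (x y : H) : ℂ := @inner ℂ _ _ (A x) y

/-- The `A`-seminorm `‖x‖_A = √⟨A x, x⟩`. -/
def vnormA (A : H →L[ℂ] H) (x : H) : ℝ := Real.sqrt (innA A x x).re

/-- The `A`-operator seminorm `‖T‖_A = sup {‖T x‖_A : ‖x‖_A = 1}`. -/
def opnormA (A T : H →L[ℂ] H) : ℝ :=
  sSup {r : ℝ | ∃ x : H, vnormA A x = 1 ∧ r = vnormA A (T x)}

/-- The `A`-numerical radius `w_A(T) = sup {|⟨T x, x⟩_A| : ‖x‖_A = 1}`. -/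
def wA (A T : H →L[ℂ] H) : ℝ :=
  sSup {r : ℝ | ∃ x : H, vnormA A x = 1 ∧ r = ‖innA A (T x) x‖}

/-- The `A`-numerical range `W_A(T) = {⟨T x, x⟩_A : ‖x‖_A = 1}`. -/
def WA (A T : H →L[ℂ] H) : Set ℂ :=
  {z : ℂ | ∃ x : H, vnormA A x = 1 ∧ z = innA A (T x) x}

/-- `Re_A(T) = (T + T♯)/2`, given an `A`-adjoint `Ts` of `T`. -/
def ReA (T Ts : H →L[ℂ] H) : H →L[ℂ] H := (2 : ℂ)⁻¹ • (T + Ts)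

/-- `Im_A(T) = (T - T♯)/(2i)`, given an `A`-adjoint `Ts` of `T`. -/
def ImA (T Ts : H →L[ℂ] H) : H →L[ℂ] H := (2 * Complex.I)⁻¹ • (T - Ts)

/-- `Ts` is an `A`-adjoint of `T`, i.e. `A ∘ Ts = T* ∘ A`. -/
def IsAAdjoint (A T Ts : H →L[ℂ] H) : Prop :=
  A.comp Ts = (ContinuousLinearMap.adjoint T).comp A

/-!
With `R = A ^ (1/2)` one has `‖x‖_A = ‖R x‖`, so the `A`-seminorm obeys Cauchy–Schwarz, the
triangle inequality and the parallelogram law. An operator with an `A`-adjoint is `A`-bounded: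
for `A`-selfadjoint `S` the inequality `‖S x‖_A ^ 2 ≤ ‖S ^ 2 x‖_A ‖x‖_A`, iterated along the
powers `S ^ 2 ^ n`, gives `‖S x‖_A ≤ ‖S‖ ‖x‖_A`, and this applies to `S = T♯ T`. Hence the
suprema `‖T‖_A` and `w_A(T)` are finite and control `‖T x‖_A` and `|⟨T x, x⟩_A|`.

For `A`-selfadjoint `S`, polarization gives `‖S‖_A ≤ w_A(S)`. As `⟨Re_A(T) x, x⟩_A` and
`⟨Im_A(T) x, x⟩_A` are the real and (up to sign) imaginary parts of `⟨T x, x⟩_A`, both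
`‖Re_A(e^{iθ}T)‖_A` and `‖Im_A(e^{iθ}T)‖_A` are at most `w_A(T)`, while
`e^{iθ}T = Re_A(e^{iθ}T) + i Im_A(e^{iθ}T)` bounds `‖T‖_A` by their sum. This gives the forward
direction, and `‖T‖_A ≤ 2 w_A(T)`. Conversely, for `θ = arg ⟨T x, x⟩_A` one has
`|⟨T x, x⟩_A| = ⟨Re_A(e^{iθ}T) x, x⟩_A`, which is at most `‖T‖_A / 2` by hypothesis.
-/

set_option linter.unusedSectionVars false

open ComplexConjugate
open scoped InnerProductSpace

section Seminorm

variable {A : H →L[ℂ] H}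

theorem innA_eq_inner_sqrt (hA : A.IsPositive) (x y : H) :
    innA A x y = ⟪CFC.sqrt A x, CFC.sqrt A y⟫_ℂ := by
  have hR : IsSelfAdjoint (CFC.sqrt A) :=
    ((nonneg_iff_isPositive _).mp (CFC.sqrt_nonneg A)).isSelfAdjoint
  rw [innA]
  conv_lhs => rw [← CFC.sq_sqrt A ((nonneg_iff_isPositive A).mpr hA), sq, mul_apply_eq_comp]
  rw [← adjoint_inner_right, ← star_eq_adjoint, hR.star_eq]

theorem vnormA_eq_norm_sqrt (hA : A.IsPositive) (x : H) : vnormA A x = ‖CFC.sqrt A x‖ := by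
  rw [vnormA, innA_eq_inner_sqrt hA, ← RCLike.re_eq_complex_re, inner_self_eq_norm_sq,
    Real.sqrt_sq (norm_nonneg _)]

theorem vnormA_nonneg (x : H) : 0 ≤ vnormA A x := Real.sqrt_nonneg _

theorem innA_self (hA : A.IsPositive) (x : H) : innA A x x = ((vnormA A x ^ 2 : ℝ) : ℂ) := by
  rw [innA_eq_inner_sqrt hA, vnormA_eq_norm_sqrt hA, inner_self_eq_norm_sq_to_K]
  norm_cast

theorem conj_innA (hA : A.IsPositive) (x y : H) : conj (innA A x y) = innA A y x := by
  rw [innA_eq_inner_sqrt hA, innA_eq_inner_sqrt hA, inner_conj_symm]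

theorem norm_innA_le (hA : A.IsPositive) (x y : H) :
    ‖innA A x y‖ ≤ vnormA A x * vnormA A y := by
  rw [innA_eq_inner_sqrt hA, vnormA_eq_norm_sqrt hA, vnormA_eq_norm_sqrt hA]
  exact norm_inner_le_norm _ _

theorem innA_smul_left (c : ℂ) (x y : H) : innA A (c • x) y = conj c * innA A x y := by
  rw [innA, map_smul, inner_smul_left, innA]

theorem innA_smul_right (c : ℂ) (x y : H) : innA A x (c • y) = c * innA A x y :=
  inner_smul_right _ _ _

theorem vnormA_smul (hA : A.IsPositive) (c : ℂ) (x : H) :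
    vnormA A (c • x) = ‖c‖ * vnormA A x := by
  rw [vnormA_eq_norm_sqrt hA, vnormA_eq_norm_sqrt hA, map_smul, norm_smul]

theorem vnormA_add_le (hA : A.IsPositive) (x y : H) :
    vnormA A (x + y) ≤ vnormA A x + vnormA A y := by
  simp only [vnormA_eq_norm_sqrt hA, map_add]
  exact norm_add_le _ _

theorem vnormA_add_sq_add_vnormA_sub_sq (hA : A.IsPositive) (x y : H) :
    vnormA A (x + y) ^ 2 + vnormA A (x - y) ^ 2 = 2 * (vnormA A x ^ 2 + vnormA A y ^ 2) := by
  simp only [vnormA_eq_norm_sqrt hA, map_add, map_sub]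
  exact parallelogram_law_with_norm ℂ (CFC.sqrt A x) (CFC.sqrt A y)

theorem vnormA_le (hA : A.IsPositive) (x : H) : vnormA A x ≤ ‖CFC.sqrt A‖ * ‖x‖ := by
  rw [vnormA_eq_norm_sqrt hA]
  exact le_opNorm _ _

theorem vnormA_inv_smul_self (hA : A.IsPositive) {x : H} (hx : vnormA A x ≠ 0) :
    vnormA A ((((vnormA A x)⁻¹ : ℝ) : ℂ) • x) = 1 := by
  rw [vnormA_smul hA, norm_real, Real.norm_eq_abs,
    abs_inv, abs_of_nonneg (vnormA_nonneg x), inv_mul_cancel₀ hx]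

end Seminorm

namespace IsAAdjoint

variable {A T Ts U Us : H →L[ℂ] H}

theorem apply (hTs : IsAAdjoint A T Ts) (x : H) : A (Ts x) = adjoint T (A x) :=
  congrArg (fun S : H →L[ℂ] H => S x) hTs

theorem innA_apply_left (hTs : IsAAdjoint A T Ts) (x y : H) :
    innA A (Ts x) y = innA A x (T y) := by
  rw [innA, hTs.apply, adjoint_inner_left, innA]

theorem symm (hA : A.IsPositive) (hTs : IsAAdjoint A T Ts) : IsAAdjoint A Ts T := by
  have h := congrArg adjoint hTs
  rw [adjoint_comp, adjoint_comp, adjoint_adjoint, hA.isSelfAdjoint.adjoint_eq] at h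
  exact h.symm

theorem mul (hTs : IsAAdjoint A T Ts) (hUs : IsAAdjoint A U Us) :
    IsAAdjoint A (T * U) (Us * Ts) := by
  rw [IsAAdjoint, mul_def, mul_def, adjoint_comp, ← comp_assoc, hUs, comp_assoc, hTs,
    comp_assoc]

theorem pow (hTs : IsAAdjoint A T Ts) (n : ℕ) : IsAAdjoint A (T ^ n) (Ts ^ n) := by
  induction n with
  | zero =>
    rw [pow_zero, pow_zero, IsAAdjoint, ← mul_def, ← mul_def, adjoint_one, mul_one, one_mul]
  | succ n ih => rw [pow_succ, pow_succ']; exact ih.mul hTs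

theorem add (hTs : IsAAdjoint A T Ts) (hUs : IsAAdjoint A U Us) :
    IsAAdjoint A (T + U) (Ts + Us) := by
  rw [IsAAdjoint, comp_add, hTs, hUs, map_add, add_comp]

theorem sub (hTs : IsAAdjoint A T Ts) (hUs : IsAAdjoint A U Us) :
    IsAAdjoint A (T - U) (Ts - Us) := by
  rw [IsAAdjoint, comp_sub, hTs, hUs, map_sub, sub_comp]

theorem smul (hTs : IsAAdjoint A T Ts) (c : ℂ) : IsAAdjoint A (c • T) (conj c • Ts) := by
  rw [IsAAdjoint, comp_smul, hTs, LinearIsometryEquiv.map_smulₛₗ, smul_comp]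

theorem reA (hA : A.IsPositive) (hTs : IsAAdjoint A T Ts) :
    IsAAdjoint A (ReA T Ts) (ReA T Ts) := by
  have h := (hTs.add (hTs.symm hA)).smul (2 : ℂ)⁻¹
  rwa [map_inv₀, map_ofNat, add_comm Ts] at h

theorem imA (hA : A.IsPositive) (hTs : IsAAdjoint A T Ts) :
    IsAAdjoint A (ImA T Ts) (ImA T Ts) := by
  have h := (hTs.sub (hTs.symm hA)).smul (2 * I)⁻¹
  rwa [map_inv₀, map_mul, map_ofNat, conj_I, mul_neg, inv_neg, neg_smul, ← smul_neg,
    neg_sub] at h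

theorem vnormA_apply_sq_le (hA : A.IsPositive) (hTs : IsAAdjoint A T Ts) (x : H) :
    vnormA A (T x) ^ 2 ≤ vnormA A (Ts (T x)) * vnormA A x :=
  calc vnormA A (T x) ^ 2 = (innA A (Ts (T x)) x).re := by
        rw [hTs.innA_apply_left, innA_self hA, ofReal_re]
    _ ≤ ‖innA A (Ts (T x)) x‖ := re_le_norm _
    _ ≤ vnormA A (Ts (T x)) * vnormA A x := norm_innA_le hA _ _

end IsAAdjoint

def IsABounded (A T : H →L[ℂ] H) : Prop :=
  ∃ c : ℝ, ∀ x, vnormA A (T x) ≤ c * vnormA A x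

section Bounded

variable {A T : H →L[ℂ] H}

theorem opnormA_nonneg : 0 ≤ opnormA A T :=
  Real.sSup_nonneg (by rintro r ⟨x, -, rfl⟩; exact vnormA_nonneg _)

theorem wA_nonneg : 0 ≤ wA A T :=
  Real.sSup_nonneg (by rintro r ⟨x, -, rfl⟩; exact norm_nonneg _)

theorem opnormA_le {c : ℝ} (hc : 0 ≤ c) (h : ∀ x, vnormA A x = 1 → vnormA A (T x) ≤ c) :
    opnormA A T ≤ c :=
  Real.sSup_le (by rintro r ⟨x, hx, rfl⟩; exact h x hx) hc

theorem wA_le {c : ℝ} (hc : 0 ≤ c) (h : ∀ x, vnormA A x = 1 → ‖innA A (T x) x‖ ≤ c) :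
    wA A T ≤ c :=
  Real.sSup_le (by rintro r ⟨x, hx, rfl⟩; exact h x hx) hc

theorem vnormA_apply_le_opnormA (hA : A.IsPositive) (hT : IsABounded A T) (x : H) :
    vnormA A (T x) ≤ opnormA A T * vnormA A x := by
  obtain ⟨c, hc⟩ := hT
  by_cases hx : vnormA A x = 0
  · simpa [hx] using hc x
  set y := (((vnormA A x)⁻¹ : ℝ) : ℂ) • x
  have hy : vnormA A (T y) = (vnormA A x)⁻¹ * vnormA A (T x) := by
    rw [map_smul, vnormA_smul hA, norm_real, Real.norm_eq_abs,
      abs_of_nonneg (inv_nonneg.mpr (vnormA_nonneg x))]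
  have hbdd : BddAbove {r : ℝ | ∃ x : H, vnormA A x = 1 ∧ r = vnormA A (T x)} :=
    ⟨c, by rintro r ⟨z, hz, rfl⟩; simpa [hz] using hc z⟩
  have hle : vnormA A (T y) ≤ opnormA A T := le_csSup hbdd ⟨y, vnormA_inv_smul_self hA hx, rfl⟩
  rw [hy, inv_mul_le_iff₀ (lt_of_le_of_ne (vnormA_nonneg x) (Ne.symm hx))] at hle
  linarith

theorem norm_innA_apply_self_le_wA (hA : A.IsPositive) (hT : IsABounded A T) (x : H) :
    ‖innA A (T x) x‖ ≤ wA A T * vnormA A x ^ 2 := by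
  obtain ⟨c, hc⟩ := hT
  by_cases hx : vnormA A x = 0
  · simpa [hx] using norm_innA_le hA (T x) x
  set y := (((vnormA A x)⁻¹ : ℝ) : ℂ) • x
  have hy : ‖innA A (T y) y‖ = (vnormA A x)⁻¹ ^ 2 * ‖innA A (T x) x‖ := by
    rw [map_smul, innA_smul_left, innA_smul_right, norm_mul, norm_mul, RCLike.norm_conj,
      norm_real, Real.norm_eq_abs, abs_of_nonneg (inv_nonneg.mpr (vnormA_nonneg x))]
    ring
  have hbdd : BddAbove {r : ℝ | ∃ x : H, vnormA A x = 1 ∧ r = ‖innA A (T x) x‖} := by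
    refine ⟨c, ?_⟩
    rintro r ⟨z, hz, rfl⟩
    calc ‖innA A (T z) z‖ ≤ vnormA A (T z) * vnormA A z := norm_innA_le hA _ _
      _ ≤ c := by simpa [hz] using hc z
  have hle : ‖innA A (T y) y‖ ≤ wA A T := le_csSup hbdd ⟨y, vnormA_inv_smul_self hA hx, rfl⟩
  rw [hy, inv_pow, inv_mul_le_iff₀ (by positivity)] at hle
  linarith

end Bounded

theorem le_one_of_forall_pow_two_pow_le {t K : ℝ} (h : ∀ n : ℕ, t ^ 2 ^ n ≤ K) : t ≤ 1 := by
  by_contra! ht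
  obtain ⟨n, hn⟩ := pow_unbounded_of_one_lt K ht
  exact (h n).not_gt (hn.trans_le (pow_le_pow_right₀ ht.le Nat.lt_two_pow_self.le))

namespace IsAAdjoint

variable {A S T Ts : H →L[ℂ] H}

theorem div_vnormA_pow_two_pow_le (hA : A.IsPositive) (hS : IsAAdjoint A S S) {x : H}
    (hx : 0 < vnormA A x) (n : ℕ) :
    (vnormA A (S x) / vnormA A x) ^ 2 ^ n ≤ vnormA A ((S ^ 2 ^ n) x) / vnormA A x := by
  induction n with
  | zero => simp
  | succ n ih =>
    have hsq := (hS.pow (2 ^ n)).vnormA_apply_sq_le hA x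
    rw [← mul_apply_eq_comp, ← pow_add, ← two_mul, ← pow_succ'] at hsq
    calc (vnormA A (S x) / vnormA A x) ^ 2 ^ (n + 1)
        = ((vnormA A (S x) / vnormA A x) ^ 2 ^ n) ^ 2 := by rw [pow_succ, pow_mul]
      _ ≤ (vnormA A ((S ^ 2 ^ n) x) / vnormA A x) ^ 2 :=
        pow_le_pow_left₀ (pow_nonneg (div_nonneg (vnormA_nonneg _) hx.le) _) ih 2
      _ ≤ vnormA A ((S ^ 2 ^ (n + 1)) x) / vnormA A x := by
        rw [div_pow, div_le_div_iff₀ (by positivity) hx]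
        nlinarith

theorem vnormA_apply_le_of_self (hA : A.IsPositive) (hS : IsAAdjoint A S S) (x : H) :
    vnormA A (S x) ≤ ‖S‖ * vnormA A x := by
  rcases (vnormA_nonneg x).eq_or_lt with hx | hx
  · have h := hS.vnormA_apply_sq_le hA x
    rw [← hx, mul_zero] at h ⊢
    nlinarith [vnormA_nonneg (A := A) (S x)]
  rcases (norm_nonneg S).eq_or_lt with hS0 | hS0
  · simp [norm_eq_zero.mp hS0.symm, vnormA, innA]
  have key (n : ℕ) :
      (vnormA A (S x) / vnormA A x / ‖S‖) ^ 2 ^ n ≤ ‖CFC.sqrt A‖ * ‖x‖ / vnormA A x := by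
    rw [div_pow, div_le_iff₀ (by positivity), div_mul_eq_mul_div]
    refine (hS.div_vnormA_pow_two_pow_le hA hx n).trans (div_le_div_of_nonneg_right ?_ hx.le)
    calc vnormA A ((S ^ 2 ^ n) x) ≤ ‖CFC.sqrt A‖ * (‖S ^ 2 ^ n‖ * ‖x‖) :=
          (vnormA_le hA _).trans (by gcongr; exact le_opNorm _ _)
      _ ≤ ‖CFC.sqrt A‖ * ‖x‖ * ‖S‖ ^ 2 ^ n := by
          rw [mul_comm ‖S ^ 2 ^ n‖, ← mul_assoc]
          gcongr
          exact norm_pow_le' S (by positivity)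
  have h := le_one_of_forall_pow_two_pow_le key
  rwa [div_le_one hS0, div_le_iff₀ hx] at h

theorem isABounded (hA : A.IsPositive) (hTs : IsAAdjoint A T Ts) : IsABounded A T := by
  refine ⟨√‖Ts * T‖, fun x => le_of_pow_le_pow_left₀ two_ne_zero
    (mul_nonneg (Real.sqrt_nonneg _) (vnormA_nonneg x)) ?_⟩
  calc vnormA A (T x) ^ 2 ≤ vnormA A (Ts (T x)) * vnormA A x := hTs.vnormA_apply_sq_le hA x
    _ ≤ ‖Ts * T‖ * vnormA A x * vnormA A x := mul_le_mul_of_nonneg_right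
        (((hTs.symm hA).mul hTs).vnormA_apply_le_of_self hA x) (vnormA_nonneg x)
    _ = (√‖Ts * T‖ * vnormA A x) ^ 2 := by rw [mul_pow, Real.sq_sqrt (norm_nonneg _)]; ring

theorem innA_apply_self_conj (hA : A.IsPositive) (hTs : IsAAdjoint A T Ts) (x : H) :
    innA A (Ts x) x = conj (innA A (T x) x) := by
  rw [hTs.innA_apply_left, conj_innA hA]

theorem two_mul_re_innA_le_wA (hA : A.IsPositive) (hS : IsAAdjoint A S S) (x y : H) :
    2 * (innA A (S x) y).re ≤ wA A S * (vnormA A x ^ 2 + vnormA A y ^ 2) := by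
  have hpol : innA A (S (x + y)) (x + y) - innA A (S (x - y)) (x - y)
      = 2 * (innA A (S x) y + conj (innA A (S x) y)) := by
    rw [conj_innA hA, ← hS.innA_apply_left]
    simp only [innA, map_add, map_sub, inner_add_left, inner_add_right, inner_sub_left,
      inner_sub_right]
    ring
  have hw (z : H) : ‖innA A (S z) z‖ ≤ wA A S * vnormA A z ^ 2 :=
    norm_innA_apply_self_le_wA hA (hS.isABounded hA) z
  rw [add_conj] at hpol
  have hre := congrArg re hpol
  simp only [sub_re, mul_re, re_ofNat, im_ofNat, ofReal_re, ofReal_im, zero_mul, sub_zero]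
    at hre
  have hsum := (re_le_norm _).trans (hw (x + y))
  have hdiff := (neg_le_of_abs_le (abs_re_le_norm _)).trans' (neg_le_neg (hw (x - y)))
  have hpar := congrArg (wA A S * ·) (vnormA_add_sq_add_vnormA_sub_sq hA x y)
  linarith

theorem opnormA_le_wA (hA : A.IsPositive) (hS : IsAAdjoint A S S) : opnormA A S ≤ wA A S := by
  refine opnormA_le wA_nonneg fun x hx => ?_
  rcases (vnormA_nonneg (S x)).eq_or_lt with hSx | hSx
  · exact hSx ▸ wA_nonneg
  have h := hS.two_mul_re_innA_le_wA hA x ((((vnormA A (S x))⁻¹ : ℝ) : ℂ) • S x)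
  rw [vnormA_inv_smul_self hA hSx.ne', hx, innA_smul_right, innA_self hA, ← ofReal_mul,
    ofReal_re, inv_mul_eq_div, sq, mul_self_div_self] at h
  linarith

theorem innA_reA_apply_self (hA : A.IsPositive) (hTs : IsAAdjoint A T Ts) (x : H) :
    innA A (ReA T Ts x) x = (innA A (T x) x).re := by
  rw [ReA, smul_apply, add_apply, innA_smul_left, innA, map_add, inner_add_left, ← innA, ← innA,
    hTs.innA_apply_self_conj hA, add_conj, map_inv₀, map_ofNat]
  push_cast
  ring

theorem innA_imA_apply_self (hA : A.IsPositive) (hTs : IsAAdjoint A T Ts) (x : H) :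
    innA A (ImA T Ts x) x = -(innA A (T x) x).im := by
  rw [ImA, smul_apply, sub_apply, innA_smul_left, innA, map_sub, inner_sub_left, ← innA, ← innA,
    hTs.innA_apply_self_conj hA, sub_conj, map_inv₀, map_mul, map_ofNat, conj_I]
  push_cast
  field_simp

end IsAAdjoint

section Cartesian

variable {A T Ts : H →L[ℂ] H}

theorem opnormA_reA_le_wA (hA : A.IsPositive) (hTs : IsAAdjoint A T Ts) :
    opnormA A (ReA T Ts) ≤ wA A T := by
  refine ((hTs.reA hA).opnormA_le_wA hA).trans (wA_le wA_nonneg fun x hx => ?_)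
  have h := norm_innA_apply_self_le_wA hA (hTs.isABounded hA) x
  rw [hx, one_pow, mul_one] at h
  rw [hTs.innA_reA_apply_self hA, norm_real, Real.norm_eq_abs]
  exact (abs_re_le_norm _).trans h

theorem opnormA_imA_le_wA (hA : A.IsPositive) (hTs : IsAAdjoint A T Ts) :
    opnormA A (ImA T Ts) ≤ wA A T := by
  refine ((hTs.imA hA).opnormA_le_wA hA).trans (wA_le wA_nonneg fun x hx => ?_)
  have h := norm_innA_apply_self_le_wA hA (hTs.isABounded hA) x
  rw [hx, one_pow, mul_one] at h
  rw [hTs.innA_imA_apply_self hA, ← ofReal_neg, norm_real, Real.norm_eq_abs, abs_neg]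
  exact (abs_im_le_norm _).trans h

theorem reA_add_I_smul_imA (T Ts : H →L[ℂ] H) : ReA T Ts + I • ImA T Ts = T := by
  rw [ReA, ImA, smul_smul, mul_inv_rev, ← mul_assoc, mul_inv_cancel₀ I_ne_zero, one_mul,
    ← smul_add, add_add_sub_cancel, ← two_smul ℂ, smul_smul, inv_mul_cancel₀ two_ne_zero, one_smul]

theorem opnormA_le_opnormA_reA_add_opnormA_imA (hA : A.IsPositive) (hTs : IsAAdjoint A T Ts) :
    opnormA A T ≤ opnormA A (ReA T Ts) + opnormA A (ImA T Ts) := by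
  refine opnormA_le (add_nonneg opnormA_nonneg opnormA_nonneg) fun x hx => ?_
  calc vnormA A (T x) = vnormA A (ReA T Ts x + I • ImA T Ts x) := by
        rw [← smul_apply, ← add_apply, reA_add_I_smul_imA]
    _ ≤ vnormA A (ReA T Ts x) + vnormA A (ImA T Ts x) := by
        rw [← one_mul (vnormA A (ImA T Ts x)), ← norm_I, ← vnormA_smul hA]
        exact vnormA_add_le hA _ _
    _ ≤ opnormA A (ReA T Ts) + opnormA A (ImA T Ts) := by
        have hRe := vnormA_apply_le_opnormA hA ((hTs.reA hA).isABounded hA) x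
        have hIm := vnormA_apply_le_opnormA hA ((hTs.imA hA).isABounded hA) x
        rw [hx, mul_one] at hRe hIm
        exact add_le_add hRe hIm

theorem opnormA_le_two_mul_wA (hA : A.IsPositive) (hTs : IsAAdjoint A T Ts) :
    opnormA A T ≤ 2 * wA A T := by
  linarith [opnormA_le_opnormA_reA_add_opnormA_imA hA hTs, opnormA_reA_le_wA hA hTs,
    opnormA_imA_le_wA hA hTs]

end Cartesian

section Rotation

variable {A T Ts : H →L[ℂ] H} {c : ℂ}

theorem wA_smul_of_norm_eq_one (hc : ‖c‖ = 1) : wA A (c • T) = wA A T := by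
  simp only [wA, smul_apply, innA_smul_left, norm_mul, RCLike.norm_conj, hc, one_mul]

theorem opnormA_smul_of_norm_eq_one (hA : A.IsPositive) (hc : ‖c‖ = 1) :
    opnormA A (c • T) = opnormA A T := by
  simp only [opnormA, smul_apply, vnormA_smul hA, hc, one_mul]

theorem exp_neg_mul_I_eq_conj (θ : ℝ) : exp (-θ * I) = conj (exp (θ * I)) := by
  rw [← exp_conj, map_mul, conj_ofReal, conj_I, mul_neg, neg_mul]

theorem wA_le_of_forall_opnormA_reA_le (hA : A.IsPositive) (hTs : IsAAdjoint A T Ts) {b : ℝ}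
    (h : ∀ θ : ℝ, opnormA A (ReA (exp (θ * I) • T) (exp (-θ * I) • Ts)) ≤ b) : wA A T ≤ b := by
  refine wA_le (opnormA_nonneg.trans (h 0)) fun x hx => ?_
  set z := innA A (T x) x
  set c := exp (z.arg * I)
  have hc : conj c * z = ‖z‖ := by
    conv_lhs => rw [← norm_mul_exp_arg_mul_I z]
    rw [mul_left_comm, conj_mul', norm_exp_ofReal_mul_I, ofReal_one, one_pow, mul_one]
  have hcTs := hTs.smul c
  have hRe := hcTs.innA_reA_apply_self hA x
  rw [smul_apply, innA_smul_left, hc, ofReal_re] at hRe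
  calc ‖z‖ = ‖innA A (ReA (c • T) (conj c • Ts) x) x‖ := by rw [hRe, norm_real, norm_norm]
    _ ≤ vnormA A (ReA (c • T) (conj c • Ts) x) * vnormA A x := norm_innA_le hA _ _
    _ ≤ opnormA A (ReA (c • T) (conj c • Ts)) * vnormA A x * vnormA A x := by
        gcongr
        exact vnormA_apply_le_opnormA hA ((hcTs.reA hA).isABounded hA) x
    _ ≤ b := by rw [hx, mul_one, mul_one, ← exp_neg_mul_I_eq_conj]; exact h _

end Rotation

theorem stmt4 (A T Ts : H →L[ℂ] H) (hA : A.IsPositive) (hTs : IsAAdjoint A T Ts) :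
    wA A T = opnormA A T / 2 ↔
      ∀ θ : ℝ,
        opnormA A (ReA (Complex.exp ((θ : ℂ) * Complex.I) • T)
            (Complex.exp (-(θ : ℂ) * Complex.I) • Ts)) = opnormA A T / 2 ∧
        opnormA A (ImA (Complex.exp ((θ : ℂ) * Complex.I) • T)
            (Complex.exp (-(θ : ℂ) * Complex.I) • Ts)) = opnormA A T / 2 := by
  constructor
  · intro hw θ
    have hunit : ‖exp (θ * I)‖ = 1 := norm_exp_ofReal_mul_I θ
    have hθ := hTs.smul (exp (θ * I))
    rw [← exp_neg_mul_I_eq_conj] at hθ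
    have hRe := opnormA_reA_le_wA hA hθ
    have hIm := opnormA_imA_le_wA hA hθ
    have hsum := opnormA_le_opnormA_reA_add_opnormA_imA hA hθ
    rw [wA_smul_of_norm_eq_one hunit] at hRe hIm
    rw [opnormA_smul_of_norm_eq_one hA hunit] at hsum
    constructor <;> linarith
  · intro h
    refine le_antisymm (wA_le_of_forall_opnormA_reA_le hA hTs fun θ => (h θ).1.le) ?_
    linarith [opnormA_le_two_mul_wA hA hTs]
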